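/- arXiv:1909.03662 — 3 statements merged into one kernel-verified Lean document; each statement's English description precedes it below -/
import Mathlib

section
/- If A is a Hermitian positive semidefinite 2n×2n complex matrix and J is the standard symplectic matrix, then every eigenvalue of JA is purely imaginary, i.e. the spectrum of JA is contained in iℝ. -/
/-!
Let `(J * A) v = μ • v` with `v ≠ 0` and put `w = A v`. Then `w* J w = μ · v* A v` with
`v* A v ≥ 0`, while `w* J w` is purely imaginary because `J` is skew-Hermitian. Hence
`Re μ · v* A v = 0`; and if `v* A v = 0` then `A v = 0`, so `μ v = J A v = 0` forces `μ = 0`.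
-/

open Matrix
open scoped ComplexOrder

namespace Matrix

theorem conjTranspose_fromBlocks_zero_one_neg_one {m R : Type*} [DecidableEq m] [Ring R]
    [StarRing R] :
    (fromBlocks 0 1 (-1) 0 : Matrix (m ⊕ m) (m ⊕ m) R)ᴴ = -fromBlocks 0 1 (-1) 0 := by
  simp [fromBlocks_conjTranspose, fromBlocks_neg]

variable {m : Type*} [Fintype m]

theorem star_dotProduct_mulVec_of_conjTranspose_eq_neg {𝕜 : Type*} [RCLike 𝕜]
    {J : Matrix m m 𝕜} (hJ : Jᴴ = -J) (w : m → 𝕜) :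
    star (star w ⬝ᵥ J *ᵥ w) = -(star w ⬝ᵥ J *ᵥ w) := by
  rw [← star_dotProduct_star, star_star, star_mulVec, hJ, ← dotProduct_mulVec, neg_mulVec,
    dotProduct_neg]

variable [DecidableEq m]

theorem exists_mulVec_eq_smul_of_mem_spectrum {K : Type*} [Field K] {M : Matrix m m K} {μ : K}
    (hμ : μ ∈ spectrum K M) : ∃ v ≠ 0, M *ᵥ v = μ • v := by
  rw [← spectrum_toLin', ← Module.End.hasEigenvalue_iff_mem_spectrum] at hμ
  obtain ⟨v, hv⟩ := hμ.exists_hasEigenvector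
  exact ⟨v, hv.2, by simpa using hv.apply_eq_smul⟩

theorem re_eq_zero_of_mem_spectrum_mul_posSemidef {𝕜 : Type*} [RCLike 𝕜] {J A : Matrix m m 𝕜}
    (hJ : Jᴴ = -J) (hA : A.PosSemidef) {μ : 𝕜} (hμ : μ ∈ spectrum 𝕜 (J * A)) :
    RCLike.re μ = 0 := by
  obtain ⟨v, hv0, hv⟩ := exists_mulVec_eq_smul_of_mem_spectrum hμ
  set c := star v ⬝ᵥ A *ᵥ v with hc
  have hc_self : star c = c := (IsSelfAdjoint.of_nonneg (hA.dotProduct_mulVec_nonneg v)).star_eq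
  have hquad : star (A *ᵥ v) ⬝ᵥ J *ᵥ (A *ᵥ v) = μ * c := by
    rw [mulVec_mulVec, hv, dotProduct_smul, smul_eq_mul, star_mulVec, ← dotProduct_mulVec,
      hA.1, ← hc]
  have hkey : (star μ + μ) * c = 0 := by
    have hskew := star_dotProduct_mulVec_of_conjTranspose_eq_neg hJ (A *ᵥ v)
    rw [hquad, star_mul', hc_self] at hskew
    linear_combination hskew
  rcases mul_eq_zero.mp hkey with h | h
  · simpa [RCLike.star_def, ← RCLike.re_eq_add_conj] using congrArg RCLike.re h
  · have hAv : A *ᵥ v = 0 := (hA.dotProduct_mulVec_zero_iff v).mp h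
    have hμv : μ • v = 0 := by rw [← hv, ← mulVec_mulVec, hAv, mulVec_zero]
    simp [(smul_eq_zero.mp hμv).resolve_right hv0]

end Matrix

theorem spectrum_JA_purely_imaginary (n : ℕ)
    (J A : Matrix (Fin n ⊕ Fin n) (Fin n ⊕ Fin n) ℂ)
    (hJ : J = Matrix.fromBlocks 0 1 (-1) 0)
    (hA : A.PosSemidef) :
    ∀ μ ∈ spectrum ℂ (J * A), μ.re = 0 := by
  intro μ hμ
  subst hJ
  exact re_eq_zero_of_mem_spectrum_mul_posSemidef conjTranspose_fromBlocks_zero_one_neg_one hA hμ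
end

section
/- Let Q be a complex symmetric 2n×2n matrix with Re Q positive semidefinite and J the standard symplectic matrix. Then for all t ∈ ℝ, e^{-2itJQ} e^{-2itJ\bar{Q}} = I_{2n} - 4iJΓ_t, where Γ_t = ∫_0^t (e^{-2isJ\bar{Q}})* (Re Q) (e^{-2isJ\bar{Q}}) ds. -/
open Matrix NormedSpace
open scoped ComplexOrder

/-!
Put `A = -2iJQ` and `B = -2iJQ̄`. The product `F(s) = e^{sA} e^{sB}` satisfies
`F' = e^{sA} (A + B) e^{sB}` with `A + B = -4iJ Re Q`. As `Q` is symmetric, `Bᴴ = -2iQJ`, and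
conjugating by `J` (`J² = -1`) turns `e^{sBᴴ}` into `e^{sA}`: `e^{sA} J = J (e^{sB})ᴴ`, which
says that `e^{sA}` is symplectic since `(e^{sB})ᴴ = (e^{-sA})ᵀ`. Hence
`F'(s) = -4iJ (e^{sB})ᴴ (Re Q) e^{sB}`, and the identity is `F(t) - F(0) = ∫₀ᵗ F'`.
-/

section BanachAlgebra

variable {𝔸 : Type*} [NormedRing 𝔸] [NormedAlgebra ℂ 𝔸] [CompleteSpace 𝔸]

theorem hasDerivAt_exp_ofReal_smul_mul_exp_ofReal_smul (A B : 𝔸) (s : ℝ) :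
    HasDerivAt (fun u : ℝ => exp ((u : ℂ) • A) * exp ((u : ℂ) • B))
      (exp ((s : ℂ) • A) * (A + B) * exp ((s : ℂ) • B)) s := by
  have hA := (hasDerivAt_exp_smul_const A (s : ℂ)).scomp s Complex.ofRealCLM.hasDerivAt
  have hB := (hasDerivAt_exp_smul_const' B (s : ℂ)).scomp s Complex.ofRealCLM.hasDerivAt
  simp only [Complex.ofRealCLM_apply, Complex.ofReal_one, one_smul] at hA hB
  refine (hA.mul hB).congr_deriv ?_
  simp only [Function.comp_apply, mul_add, add_mul, mul_assoc]

theorem continuous_exp_ofReal_smul (A : 𝔸) : Continuous fun s : ℝ => exp ((s : ℂ) • A) :=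
  (differentiable_exp_smul_const ℂ A).continuous.comp Complex.continuous_ofReal

end BanachAlgebra

namespace Matrix

variable {ι : Type*} [Fintype ι]

theorem mul_apply_eq_intervalIntegral {𝕜 : Type*} [RCLike 𝕜] {g : ℝ → Matrix ι ι 𝕜}
    (hg : Continuous g) {a b : ℝ} {Γ : Matrix ι ι 𝕜} (hΓ : ∀ k l, Γ k l = ∫ s in a..b, g s k l)
    (M : Matrix ι ι 𝕜) (i j : ι) : (M * Γ) i j = ∫ s in a..b, (M * g s) i j := by
  simp_rw [mul_apply, hΓ, ← intervalIntegral.integral_const_mul]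
  rw [intervalIntegral.integral_finsetSum]
  exact fun k _ => (continuous_const.mul (hg.matrix_elem k j)).intervalIntegrable _ _

variable [DecidableEq ι]

theorem continuous_exp_ofReal_smul (A : Matrix ι ι ℂ) :
    Continuous fun s : ℝ => exp ((s : ℂ) • A) := by
  let _ := Matrix.linftyOpNormedRing (n := ι) (α := ℂ)
  let _ := Matrix.linftyOpNormedAlgebra (R := ℂ) (n := ι) (α := ℂ)
  exact _root_.continuous_exp_ofReal_smul A

theorem exp_ofReal_smul_mul_exp_ofReal_smul_apply_sub_one_apply (A B : Matrix ι ι ℂ) (t : ℝ)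
    (i j : ι) :
    (exp ((t : ℂ) • A) * exp ((t : ℂ) • B)) i j - (1 : Matrix ι ι ℂ) i j =
      ∫ s in (0 : ℝ)..t, (exp ((s : ℂ) • A) * (A + B) * exp ((s : ℂ) • B)) i j := by
  let _ := Matrix.linftyOpNormedRing (n := ι) (α := ℂ)
  let _ := Matrix.linftyOpNormedAlgebra (R := ℂ) (n := ι) (α := ℂ)
  let entry : Matrix ι ι ℂ →L[ℝ] ℂ := (entryLinearMap ℝ ℂ i j).toContinuousLinearMap
  have hderiv (s : ℝ) : HasDerivAt (fun u : ℝ => (exp ((u : ℂ) • A) * exp ((u : ℂ) • B)) i j)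
      ((exp ((s : ℂ) • A) * (A + B) * exp ((s : ℂ) • B)) i j) s :=
    entry.hasFDerivAt.comp_hasDerivAt s (hasDerivAt_exp_ofReal_smul_mul_exp_ofReal_smul A B s)
  have hcont : Continuous fun s : ℝ => (exp ((s : ℂ) • A) * (A + B) * exp ((s : ℂ) • B)) i j :=
    (((continuous_exp_ofReal_smul A).mul continuous_const).mul
      (continuous_exp_ofReal_smul B)).matrix_elem i j
  simpa using (intervalIntegral.integral_eq_sub_of_hasDerivAt (a := 0) (b := t)
    (fun s _ => hderiv s) (hcont.intervalIntegrable _ _)).symm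

theorem mul_exp_mul_eq_exp_mul_mul {𝔸 : Type*} [NormedCommRing 𝔸] [NormedAlgebra ℚ 𝔸]
    [CompleteSpace 𝔸] {J : Matrix ι ι 𝔸} (hJ : IsUnit J) (X : Matrix ι ι 𝔸) :
    J * exp (X * J) = exp (J * X) * J := by
  have hJdet := (isUnit_iff_isUnit_det J).mp hJ
  have hconj : J * X = J * (X * J) * J⁻¹ := by
    rw [Matrix.mul_assoc J, Matrix.mul_assoc X, mul_nonsing_inv J hJdet, Matrix.mul_one]
  rw [hconj, exp_conj J _ hJ, Matrix.mul_assoc _ J⁻¹, nonsing_inv_mul J hJdet, Matrix.mul_one]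

theorem conjTranspose_exp_ofReal_smul (s : ℝ) (X : Matrix ι ι ℂ) :
    (exp ((s : ℂ) • X))ᴴ = exp ((s : ℂ) • Xᴴ) := by
  rw [← exp_conjTranspose, conjTranspose_smul, Complex.star_def, Complex.conj_ofReal]

open Complex

theorem exp_smul_mul_eq_mul_conjTranspose_exp_smul {J Q : Matrix ι ι ℂ} (hJJ : J * J = -1)
    (hJH : Jᴴ = -J) (hQ : Qᵀ = Q) (s : ℝ) :
    exp ((s : ℂ) • (-2 * I) • (J * Q)) * J =
      J * (exp ((s : ℂ) • (-2 * I) • (J * Q.map (starRingEnd ℂ))))ᴴ := by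
  have hJ : IsUnit J := IsUnit.of_mul_eq_one (-J) (by rw [Matrix.mul_neg, hJJ, neg_neg])
  have hQH : (Q.map (starRingEnd ℂ))ᴴ = Q := by
    conv_rhs => rw [← hQ]
    ext; simp
  have hBH : ((-2 * I) • (J * Q.map (starRingEnd ℂ)))ᴴ = (-2 * I) • (Q * J) := by
    rw [conjTranspose_smul, conjTranspose_mul, hQH, hJH, Matrix.mul_neg, smul_neg, ← neg_smul]
    simp
  rw [conjTranspose_exp_ofReal_smul, hBH, smul_smul, smul_smul, ← Matrix.mul_smul,
    ← Matrix.smul_mul]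
  exact (mul_exp_mul_eq_exp_mul_mul hJ _).symm

theorem exp_smul_mul_add_mul_exp_smul_eq {J Q : Matrix ι ι ℂ} (hJJ : J * J = -1)
    (hJH : Jᴴ = -J) (hQ : Qᵀ = Q) (s : ℝ) :
    exp ((s : ℂ) • (-2 * I) • (J * Q)) *
        ((-2 * I) • (J * Q) + (-2 * I) • (J * Q.map (starRingEnd ℂ))) *
        exp ((s : ℂ) • (-2 * I) • (J * Q.map (starRingEnd ℂ))) =
      (-(4 * I)) • (J * ((exp ((s : ℂ) • (-2 * I) • (J * Q.map (starRingEnd ℂ))))ᴴ *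
        ((2 : ℂ)⁻¹ • (Q + Q.map (starRingEnd ℂ))) *
        exp ((s : ℂ) • (-2 * I) • (J * Q.map (starRingEnd ℂ))))) := by
  have hsum : (-2 * I) • (J * Q) + (-2 * I) • (J * Q.map (starRingEnd ℂ)) =
      (-(4 * I)) • (J * ((2 : ℂ)⁻¹ • (Q + Q.map (starRingEnd ℂ)))) := by
    rw [Matrix.mul_smul, smul_smul, ← smul_add, ← Matrix.mul_add]
    congr 1
    ring
  rw [hsum, Matrix.mul_smul, Matrix.smul_mul, ← Matrix.mul_assoc, ← Matrix.mul_assoc,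
    exp_smul_mul_eq_mul_conjTranspose_exp_smul hJJ hJH hQ, Matrix.mul_assoc J, Matrix.mul_assoc J]

end Matrix

theorem exp_product_eq_one_sub_fourI_JGamma_general (n : ℕ) (t : ℝ)
    (J Q ReQ Γ : Matrix (Fin n ⊕ Fin n) (Fin n ⊕ Fin n) ℂ)
    (hJ : J = Matrix.fromBlocks 0 1 (-1) 0)
    (hQ : Qᵀ = Q)
    (hReQ : ReQ = (2:ℂ)⁻¹ • (Q + Q.map (starRingEnd ℂ)))
    (hΓ : ∀ i j, Γ i j = ∫ s in (0:ℝ)..t,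
        ((exp ((-2 * Complex.I * (s:ℂ)) • (J * Q.map (starRingEnd ℂ))))ᴴ * ReQ *
          exp ((-2 * Complex.I * (s:ℂ)) • (J * Q.map (starRingEnd ℂ)))) i j) :
    exp ((-2 * Complex.I * (t:ℂ)) • (J * Q)) *
        exp ((-2 * Complex.I * (t:ℂ)) • (J * Q.map (starRingEnd ℂ)))
      = 1 - (4 * Complex.I) • (J * Γ) := by
  have hJJ : J * J = -1 := by simp [hJ, fromBlocks_multiply, ← fromBlocks_one, fromBlocks_neg]
  have hJH : Jᴴ = -J := by simp [hJ, fromBlocks_conjTranspose, fromBlocks_neg]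
  have hsmul (s : ℝ) (X : Matrix (Fin n ⊕ Fin n) (Fin n ⊕ Fin n) ℂ) :
      (-2 * Complex.I * (s : ℂ)) • X = (s : ℂ) • (-2 * Complex.I) • X := by
    rw [mul_comm, mul_smul]
  simp only [hsmul] at hΓ ⊢
  have hE := continuous_exp_ofReal_smul ((-2 * Complex.I) • (J * Q.map (starRingEnd ℂ)))
  have hcont := (hE.matrix_conjTranspose.matrix_mul (continuous_const (y := ReQ))).matrix_mul hE
  ext i j
  have hftc := exp_ofReal_smul_mul_exp_ofReal_smul_apply_sub_one_apply
    ((-2 * Complex.I) • (J * Q)) ((-2 * Complex.I) • (J * Q.map (starRingEnd ℂ))) t i j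
  simp only [exp_smul_mul_add_mul_exp_smul_eq hJJ hJH hQ, ← hReQ, Matrix.smul_apply,
    smul_eq_mul, intervalIntegral.integral_const_mul] at hftc
  rw [Matrix.sub_apply, Matrix.smul_apply, smul_eq_mul, mul_apply_eq_intervalIntegral hcont hΓ]
  linear_combination hftc

theorem exp_product_eq_one_sub_fourI_JGamma (n : ℕ) (t : ℝ)
    (J Q ReQ Γ : Matrix (Fin n ⊕ Fin n) (Fin n ⊕ Fin n) ℂ)
    (hJ : J = Matrix.fromBlocks 0 1 (-1) 0)
    (hQ : Qᵀ = Q)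
    (hReQ : ReQ = (2:ℂ)⁻¹ • (Q + Q.map (starRingEnd ℂ)))
    (hpos : ReQ.PosSemidef)
    (hΓ : ∀ i j, Γ i j = ∫ s in (0:ℝ)..t,
        ((exp ((-2 * Complex.I * (s:ℂ)) • (J * Q.map (starRingEnd ℂ))))ᴴ * ReQ *
          exp ((-2 * Complex.I * (s:ℂ)) • (J * Q.map (starRingEnd ℂ)))) i j) :
    exp ((-2 * Complex.I * (t:ℂ)) • (J * Q)) *
        exp ((-2 * Complex.I * (t:ℂ)) • (J * Q.map (starRingEnd ℂ)))
      = 1 - (4 * Complex.I) • (J * Γ) :=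
  exp_product_eq_one_sub_fourI_JGamma_general n t J Q ReQ Γ hJ hQ hReQ hΓ
end

section
/- Let H be a real symplectic 2n×2n matrix with ‖H - I‖ < 1 and ‖H^{-1} - I‖ < 1 (operator norm). Then the matrix B defined by 2JB = log H (principal matrix logarithm via the convergent power series log H = Σ_{k≥1} (-1)^{k-1}(H-I)^k / k) is real and symmetric, i.e. B^T = B and B has real entries. -/
/-!
Since `Hᵀ * J = J * H⁻¹`, transposing the logarithm series gives `(log H)ᵀ * J = J * log H⁻¹`,
and `log H⁻¹ = -log H`; as `J * J = -1` this is exactly the symmetry of `B = -½ J log H`.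
The identity `log H⁻¹ = -log H` is `log (1 + a) + log (1 + b) = 0` for commuting `a`, `b` with
`(1 + a) * (1 + b) = 1`: along `t ∈ [0, 1]` one has
`(1 + t • a) * (1 + t • b) = 1 + (t² - t) • (a * b)`, and
`t ↦ log (1 + t • a) + log (1 + t • b) - log (1 + (t² - t) • (a * b))` has zero derivative.
-/

open Matrix
open scoped Matrix.Norms.L2Operator

section LogOneAdd

lemma isUnit_one_add_of_norm_lt_one {R : Type*} [NormedRing R] [HasSummableGeomSeries R] {x : R}
    (hx : ‖x‖ < 1) : IsUnit (1 + x) := by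
  simpa using isUnit_one_sub_of_norm_lt_one (x := -x) (by rwa [norm_neg])

variable {A : Type*} [NormedRing A] [NormedAlgebra ℝ A]

/-- `log (1 + a)` through its Mercator series; a junk value unless `‖a‖ < 1`. -/
noncomputable def logOneAdd (a : A) : A :=
  ∑' k : ℕ, ((-1 : ℝ) ^ k / (k + 1)) • a ^ (k + 1)

@[simp]
lemma logOneAdd_zero : logOneAdd (0 : A) = 0 := by
  simp [logOneAdd]

lemma summable_logOneAdd [CompleteSpace A] {a : A} (ha : ‖a‖ < 1) :
    Summable fun k : ℕ => ((-1 : ℝ) ^ k / (k + 1)) • a ^ (k + 1) := by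
  refine .of_norm_bounded ((summable_geometric_of_lt_one (norm_nonneg a) ha).mul_left ‖a‖)
    fun k => ?_
  have hcoeff : ‖(-1 : ℝ) ^ k / (k + 1)‖ ≤ 1 := by
    rw [norm_div, norm_pow, norm_neg, norm_one, one_pow, Real.norm_of_nonneg (by positivity)]
    exact div_le_one_of_le₀ (by simp) (by positivity)
  calc ‖((-1 : ℝ) ^ k / (k + 1)) • a ^ (k + 1)‖
      ≤ 1 * ‖a‖ ^ (k + 1) := by
        rw [norm_smul]
        exact mul_le_mul hcoeff (norm_pow_le' a k.succ_pos) (norm_nonneg _) zero_le_one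
    _ = ‖a‖ * ‖a‖ ^ k := by ring

theorem hasDerivAt_logOneAdd_smul [CompleteSpace A] (x : A) {s : ℝ} (hs : ‖s • x‖ < 1) :
    HasDerivAt (fun t : ℝ => logOneAdd (t • x)) (Ring.inverse (1 + s • x) * x) s := by
  rw [norm_smul, Real.norm_eq_abs] at hs
  obtain ⟨r, hsr, hr⟩ : ∃ r, |s| < r ∧ r * ‖x‖ < 1 :=
    ((continuous_id.mul continuous_const).continuousAt.eventually_lt continuousAt_const
      hs).exists_gt
  have hr0 : 0 ≤ r := (abs_nonneg s).trans hsr.le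
  have hterm (k : ℕ) (t : ℝ) :
      HasDerivAt (fun t : ℝ => ((-1 : ℝ) ^ k / (k + 1)) • (t • x) ^ (k + 1))
        ((-t) ^ k • x ^ (k + 1)) t := by
    simp_rw [smul_pow, smul_smul]
    refine (((hasDerivAt_pow (k + 1) t).const_mul ((-1 : ℝ) ^ k / (k + 1))).smul_const
      (x ^ (k + 1))).congr_deriv ?_
    rw [neg_pow, Nat.add_sub_cancel]
    congr 1
    field_simp
    push_cast
    ring
  have hbound (k : ℕ) (t : ℝ) (ht : t ∈ Metric.ball 0 r) :
      ‖(-t) ^ k • x ^ (k + 1)‖ ≤ ‖x‖ * (r * ‖x‖) ^ k := by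
    rw [mem_ball_zero_iff, Real.norm_eq_abs] at ht
    rw [norm_smul, norm_pow, norm_neg, Real.norm_eq_abs]
    calc |t| ^ k * ‖x ^ (k + 1)‖ ≤ r ^ k * ‖x‖ ^ (k + 1) :=
          mul_le_mul (pow_le_pow_left₀ (abs_nonneg t) ht.le k) (norm_pow_le' x k.succ_pos)
            (norm_nonneg _) (pow_nonneg hr0 k)
      _ = ‖x‖ * (r * ‖x‖) ^ k := by ring
  have hsum : ∑' k : ℕ, (-s) ^ k • x ^ (k + 1) = Ring.inverse (1 + s • x) * x := by
    have hsx : ‖-(s • x)‖ < 1 := by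
      rw [norm_neg, norm_smul, Real.norm_eq_abs]; exact hs
    rw [← sub_neg_eq_add, ← geom_series_eq_inverse _ hsx,
      ← (summable_geometric_of_norm_lt_one hsx).tsum_mul_right]
    simp_rw [← neg_smul, smul_pow, smul_mul_assoc, ← pow_succ]
  rw [← hsum]
  exact hasDerivAt_tsum_of_isPreconnected
    ((summable_geometric_of_lt_one (by positivity) hr).mul_left ‖x‖) Metric.isOpen_ball
    (convex_ball 0 r).isPreconnected (fun k t _ => hterm k t) hbound
    (Metric.mem_ball_self ((abs_nonneg s).trans_lt hsr)) (by simp)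
    (by rwa [mem_ball_zero_iff, Real.norm_eq_abs])

lemma one_add_smul_mul_one_add_smul {a b : A} (h : a + b + a * b = 0) (t : ℝ) :
    (1 + t • a) * (1 + t • b) = 1 + (t ^ 2 - t) • (a * b) := by
  calc (1 + t • a) * (1 + t • b) = 1 + t • (a + b + a * b) + (t ^ 2 - t) • (a * b) := by
        simp only [add_mul, mul_add, one_mul, mul_one, smul_mul_smul_comm]
        module
    _ = 1 + (t ^ 2 - t) • (a * b) := by rw [h, smul_zero, add_zero]

lemma hasDerivAt_logOneAdd_add_logOneAdd_sub [CompleteSpace A] {a b : A}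
    (hsum : a + b + a * b = 0) (hcomm : b * a = a * b) {t : ℝ} (hta : ‖t • a‖ < 1)
    (htb : ‖t • b‖ < 1) (htc : ‖(t ^ 2 - t) • (a * b)‖ < 1) :
    HasDerivAt (fun t : ℝ => logOneAdd (t • a) + logOneAdd (t • b)
      - logOneAdd ((t ^ 2 - t) • (a * b))) 0 t := by
  have hpoly : HasDerivAt (fun t : ℝ => t ^ 2 - t) (2 * t - 1) t :=
    ((hasDerivAt_pow 2 t).sub (hasDerivAt_id' t)).congr_deriv (by ring)
  have hD := ((hasDerivAt_logOneAdd_smul a hta).add (hasDerivAt_logOneAdd_smul b htb)).sub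
    ((hasDerivAt_logOneAdd_smul (a * b) htc).scomp (h := fun t : ℝ => t ^ 2 - t) t hpoly)
  suffices Ring.inverse (1 + t • a) * a + Ring.inverse (1 + t • b) * b
      - (2 * t - 1) • (Ring.inverse (1 + (t ^ 2 - t) • (a * b)) * (a * b)) = 0 by
    rwa [this] at hD
  have huv := one_add_smul_mul_one_add_smul hsum t
  have hvu : (1 + t • b) * (1 + t • a) = 1 + (t ^ 2 - t) • (a * b) := by
    rw [one_add_smul_mul_one_add_smul (a := b) (b := a) (by rw [hcomm, add_comm b]; exact hsum),
      hcomm]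
  have hw := isUnit_one_add_of_norm_lt_one htc
  -- multiplying by `1 + (t ^ 2 - t) • (a * b) = (1 + t • a) * (1 + t • b)` clears all inverses
  refine hw.mul_left_cancel ?_
  rw [mul_zero, mul_sub, mul_add, mul_smul_comm, Ring.mul_inverse_cancel_left _ _ hw,
    ← hvu, mul_assoc, Ring.mul_inverse_cancel_left _ _ (isUnit_one_add_of_norm_lt_one hta), hvu,
    ← huv, mul_assoc, Ring.mul_inverse_cancel_left _ _ (isUnit_one_add_of_norm_lt_one htb)]
  simp only [add_mul, one_mul, smul_mul_assoc, hcomm]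
  rw [← hsum]
  module

theorem logOneAdd_add_logOneAdd_of_mul_eq_one [CompleteSpace A] {a b : A} (ha : ‖a‖ < 1)
    (hb : ‖b‖ < 1) (hab : (1 + a) * (1 + b) = 1) (hba : (1 + b) * (1 + a) = 1) :
    logOneAdd a + logOneAdd b = 0 := by
  have hsum : a + b + a * b = 0 := by
    have : (1 + a) * (1 + b) = 1 + (a + b + a * b) := by noncomm_ring
    simpa [this] using hab
  have hcomm : b * a = a * b := by
    have : (1 + b) * (1 + a) = 1 + (a + b + b * a) := by noncomm_ring
    rw [← add_right_inj (a + b), hsum]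
    simpa [this] using hba
  have hsmul {s : ℝ} {x : A} (hs : |s| ≤ 1) (hx : ‖x‖ < 1) : ‖s • x‖ < 1 := by
    rw [norm_smul, Real.norm_eq_abs]
    exact mul_lt_one_of_nonneg_of_lt_one_right hs (norm_nonneg x) hx
  have hab_lt : ‖a * b‖ < 1 :=
    (norm_mul_le a b).trans_lt (mul_lt_one_of_nonneg_of_lt_one_left (norm_nonneg a) ha hb.le)
  have hderiv (t : ℝ) (ht : t ∈ Set.Icc (0 : ℝ) 1) := by
    have ht1 : |t| ≤ 1 := abs_le.mpr ⟨by linarith [ht.1], ht.2⟩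
    have ht2 : |t ^ 2 - t| ≤ 1 := abs_le.mpr ⟨by nlinarith [ht.1, ht.2], by nlinarith [ht.1, ht.2]⟩
    exact hasDerivAt_logOneAdd_add_logOneAdd_sub hsum hcomm (hsmul ht1 ha) (hsmul ht1 hb)
      (hsmul ht2 hab_lt)
  simpa using constant_of_has_deriv_right_zero
    (fun t ht => (hderiv t ht).continuousAt.continuousWithinAt)
    (fun t ht => (hderiv t (Set.Ico_subset_Icc_self ht)).hasDerivWithinAt) 1 ⟨zero_le_one, le_rfl⟩

theorem logOneAdd_mul_eq_mul_logOneAdd [CompleteSpace A] {a b u : A} (ha : ‖a‖ < 1)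
    (hb : ‖b‖ < 1) (h : a * u = u * b) : logOneAdd a * u = u * logOneAdd b := by
  rw [logOneAdd, logOneAdd, ← (summable_logOneAdd ha).tsum_mul_right,
    ← (summable_logOneAdd hb).tsum_mul_left]
  refine tsum_congr fun k => ?_
  rw [smul_mul_assoc, mul_smul_comm, ← (SemiconjBy.pow_right h.symm (k + 1)).eq]

end LogOneAdd

namespace Matrix

variable {m : Type*} [Fintype m] [DecidableEq m]

lemma transpose_logOneAdd (a : Matrix m m ℝ) : (logOneAdd a)ᵀ = logOneAdd aᵀ := by
  simp only [logOneAdd, transpose_tsum, transpose_smul, transpose_pow]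

lemma l2_opNorm_transpose (a : Matrix m m ℝ) : ‖aᵀ‖ = ‖a‖ := by
  rw [← conjTranspose_eq_transpose_of_trivial, l2_opNorm_conjTranspose]

variable {R : Type*} [CommRing R] {J H : Matrix m m R}

lemma neg_mul_transpose_mul_mul_eq_one (hJ : J * J = -1) (hH : Hᵀ * J * H = J) :
    -(J * Hᵀ * J) * H = 1 := by
  rw [neg_mul, mul_assoc, mul_assoc, ← mul_assoc Hᵀ, hH, hJ, neg_neg]

lemma inv_eq_neg_mul_transpose_mul (hJ : J * J = -1) (hH : Hᵀ * J * H = J) :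
    H⁻¹ = -(J * Hᵀ * J) :=
  inv_eq_left_inv (neg_mul_transpose_mul_mul_eq_one hJ hH)

lemma transpose_mul_eq_mul_inv (hJ : J * J = -1) (hH : Hᵀ * J * H = J) : Hᵀ * J = J * H⁻¹ := by
  rw [inv_eq_neg_mul_transpose_mul hJ hH, mul_neg, ← mul_assoc, ← mul_assoc, hJ, neg_mul,
    one_mul, neg_mul, neg_neg]

end Matrix

theorem log_symplectic_symmetric (n : ℕ)
    (J H B : Matrix (Fin n ⊕ Fin n) (Fin n ⊕ Fin n) ℝ)
    (hJ : J = Matrix.fromBlocks 0 1 (-1) 0)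
    (hsymp : Hᵀ * J * H = J)
    (hnorm : ‖H - 1‖ < 1)
    (hnorm' : ‖H⁻¹ - 1‖ < 1)
    (hB : (2 : ℝ) • (J * B) = ∑' k : ℕ, ((-1 : ℝ) ^ k / (k + 1)) • (H - 1) ^ (k + 1)) :
    Bᵀ = B := by
  change (2 : ℝ) • (J * B) = logOneAdd (H - 1) at hB
  have hJ' : J = -Matrix.J (Fin n) ℝ := by
    rw [hJ, Matrix.J, fromBlocks_neg]; simp
  have hJJ : J * J = -1 := by rw [hJ', neg_mul_neg, J_squared]
  have hJT : Jᵀ = -J := by rw [hJ', transpose_neg, J_transpose]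
  have hinv : H⁻¹ * H = 1 := by
    rw [inv_eq_neg_mul_transpose_mul hJJ hsymp]; exact neg_mul_transpose_mul_mul_eq_one hJJ hsymp
  have hlog_inv : logOneAdd (H⁻¹ - 1) = -logOneAdd (H - 1) := by
    refine eq_neg_of_add_eq_zero_right (logOneAdd_add_logOneAdd_of_mul_eq_one hnorm hnorm' ?_ ?_)
    · simpa using mul_eq_one_comm.mp hinv
    · simpa using hinv
  have hconj : (H - 1)ᵀ * J = J * (H⁻¹ - 1) := by
    rw [transpose_sub, transpose_one, sub_mul, transpose_mul_eq_mul_inv hJJ hsymp, mul_sub,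
      one_mul, mul_one]
  have hlog_transpose : (logOneAdd (H - 1))ᵀ * J = -(J * logOneAdd (H - 1)) := by
    rw [transpose_logOneAdd, logOneAdd_mul_eq_mul_logOneAdd (by rwa [l2_opNorm_transpose])
      hnorm' hconj, hlog_inv, mul_neg]
  have hB' : B = -((2⁻¹ : ℝ) • (J * logOneAdd (H - 1))) := by
    rw [← hB, mul_smul_comm, smul_smul, inv_mul_cancel₀ two_ne_zero, one_smul, ← mul_assoc, hJJ,
      neg_one_mul, neg_neg]
  rw [hB', transpose_neg, transpose_smul, transpose_mul, hJT, mul_neg, hlog_transpose, neg_neg]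
end
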